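/- Suppose W(φ) \ ↓Z = ∅, Γ \ ↓Z ≠ ∅, and ∼ = Γ × Γ (i.e., any two points of Γ are ∼-equivalent), and let θ ∈ P(φ). Then Eigen(σ_{φ,𝔴}, V^Γ) = {r ∈ F \ {0} : 𝔴_θ · 𝔴_{φ(θ)} ⋯ 𝔴_{φ^{per(θ)−1}(θ)} = r^{per(θ)}} in case φ(Γ \ Z) = Γ, and Eigen(σ_{φ,𝔴}, V^Γ) = {r ∈ F \ {0} : 𝔴_θ · 𝔴_{φ(θ)} ⋯ 𝔴_{φ^{per(θ)−1}(θ)} = r^{per(θ)}} ∪ {0} in case φ(Γ \ Z) ≠ Γ. -/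

import Mathlib

open Function Set

/-- The weighted generalized shift `σ_{φ,𝔴}` on `V^Γ`,
sending `(x_α)_α` to `(𝔴_α • x_{φ(α)})_α`. -/
noncomputable def shiftW {F V Γ : Type*} [Field F] [AddCommGroup V] [Module F V]
    (φ : Γ → Γ) (w : Γ → F) : (Γ → V) →ₗ[F] (Γ → V) where
  toFun x := fun α => w α • x (φ α)
  map_add' x y := by funext α; simp
  map_smul' c x := by
    funext α
    simp only [Pi.smul_apply, RingHom.id_apply]
    rw [smul_comm]

/-- The set of eigenvalues of a linear self-map `T` of `W`:
all `r` such that `T x = r • x` for some nonzero `x`. -/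
def Eigen {F W : Type*} [Field F] [AddCommGroup W] [Module F W] (T : W →ₗ[F] W) : Set F :=
  {r | ∃ x : W, x ≠ 0 ∧ T x = r • x}

/-- `↓Z = ⋃_{n ≥ 0} φ^{-n}(Z)` where `Z = {α : 𝔴_α = 0}`. -/
def downZ {F Γ : Type*} [Field F] (φ : Γ → Γ) (w : Γ → F) : Set Γ :=
  ⋃ n : ℕ, φ^[n] ⁻¹' {α | w α = 0}

/-- Wandering points of `φ`: points `α` such that the sequence `(φ^n(α))_{n ≥ 1}` is injective. -/
def wanderSet {Γ : Type*} (φ : Γ → Γ) : Set Γ :=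
  {α | Function.Injective fun n : ℕ => φ^[n + 1] α}

/-- Periodic points of `φ`: points `α` with `φ^n(α) = α` for some `n ≥ 1`. -/
def periodicSet {Γ : Type*} (φ : Γ → Γ) : Set Γ :=
  {α | ∃ n : ℕ, 1 ≤ n ∧ φ^[n] α = α}

/-- `per(α) = min {n ≥ 1 : φ^n(α) = α}` for a periodic point `α`. -/
noncomputable def perOf {Γ : Type*} (φ : Γ → Γ) (α : Γ) : ℕ :=
  sInf {n : ℕ | 1 ≤ n ∧ φ^[n] α = α}

/-!
Write `p` for the minimal period of `θ`. Since every point is `∼`-equivalent to `θ`, every point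
is eventually mapped onto `θ` itself. If `σ x = r • x` with `r ≠ 0`, iterating gives
`(∏_{i<n} 𝔴_{φ^i α}) • x_{φ^n α} = r^n • x_α`; taking `φ^n α = θ` and `x_α ≠ 0` forces `x_θ ≠ 0`,
and then `n = p`, `α = θ` gives `∏_{i<p} 𝔴_{φ^i θ} = r^p`. Conversely, if this holds then
`x_α := r^{-n} ∏_{i<n} 𝔴_{φ^i α}` for any `n` with `φ^n α = θ` is well defined (two such `n`
differ by a multiple of `p`), and `α ↦ x_α • v` is an eigenvector for any `v ≠ 0`. The eigenvalue `0`
is independent of the rest: `σ` has a kernel exactly when some `β` is not of the form `φ α`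
with `𝔴_α ≠ 0`, and then the vector supported at `β` is killed.
-/

def weightProd {M Γ : Type*} [CommMonoid M] (φ : Γ → Γ) (w : Γ → M) (α : Γ) (n : ℕ) : M :=
  ∏ i ∈ Finset.range n, w (φ^[i] α)

section WeightProd

variable {M Γ : Type*} [CommMonoid M] {φ : Γ → Γ} {w : Γ → M}

theorem weightProd_zero (α : Γ) : weightProd φ w α 0 = 1 :=
  Finset.prod_range_zero _

theorem weightProd_add (α : Γ) (m n : ℕ) :
    weightProd φ w α (m + n) = weightProd φ w α m * weightProd φ w (φ^[m] α) n := by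
  simp only [weightProd, Finset.prod_range_add, ← iterate_add_apply, add_comm]

theorem weightProd_succ' (α : Γ) (n : ℕ) :
    weightProd φ w α (n + 1) = w α * weightProd φ w (φ α) n := by
  rw [add_comm, weightProd_add]
  simp [weightProd]

theorem Function.IsPeriodicPt.weightProd_mul {p : ℕ} {θ : Γ} (hθ : IsPeriodicPt φ p θ) (k : ℕ) :
    weightProd φ w θ (p * k) = weightProd φ w θ p ^ k := by
  induction k with
  | zero => simp [weightProd_zero]
  | succ k ih => rw [mul_add, mul_one, weightProd_add, hθ.mul_const k, ih, pow_succ]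

end WeightProd

theorem perOf_eq_minimalPeriod {Γ : Type*} {φ : Γ → Γ} {θ : Γ} (hθ : θ ∈ periodicSet φ) :
    perOf φ θ = minimalPeriod φ θ := by
  obtain ⟨hpos, hper⟩ : 1 ≤ perOf φ θ ∧ φ^[perOf φ θ] θ = θ := Nat.sInf_mem hθ
  have hθ' : θ ∈ periodicPts φ := mk_mem_periodicPts hpos hper
  exact le_antisymm
    (Nat.sInf_le ⟨minimalPeriod_pos_of_mem_periodicPts hθ', isPeriodicPt_minimalPeriod φ θ⟩)
    (IsPeriodicPt.minimalPeriod_le hpos hper)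

theorem exists_iterate_eq_of_iterate_eq_iterate {Γ : Type*} {φ : Γ → Γ} {α θ : Γ}
    (hθ : θ ∈ periodicPts φ) {n m : ℕ} (h : φ^[n] α = φ^[m] θ) : ∃ N, φ^[N] α = θ := by
  obtain ⟨q, hq⟩ := Nat.exists_eq_succ_of_ne_zero (minimalPeriod_pos_of_mem_periodicPts hθ).ne'
  refine ⟨q * m + n, ?_⟩
  rw [iterate_add_apply, h, ← iterate_add_apply, ← Nat.succ_mul, ← hq]
  exact (isPeriodicPt_minimalPeriod φ θ).mul_const m

section Shift

variable {F V Γ : Type*} [Field F] [AddCommGroup V] [Module F V] {φ : Γ → Γ} {w : Γ → F}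

theorem shiftW_apply (x : Γ → V) (α : Γ) : shiftW φ w x α = w α • x (φ α) := rfl

theorem zero_mem_eigen_shiftW_iff [Nontrivial V] :
    (0 : F) ∈ Eigen (shiftW (V := V) φ w) ↔ φ '' {α | w α ≠ 0} ≠ univ := by
  constructor
  · rintro ⟨x, hx0, hx⟩ hsurj
    obtain ⟨β, hβ⟩ := Function.ne_iff.1 hx0
    obtain ⟨α, hwα, rfl⟩ := hsurj.symm ▸ mem_univ β
    have h := congrFun hx α
    rw [shiftW_apply, zero_smul, Pi.zero_apply] at h
    exact hβ ((smul_eq_zero.1 h).resolve_left hwα)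
  · intro hns
    classical
    obtain ⟨β, hβ⟩ := (ne_univ_iff_exists_notMem _).1 hns
    obtain ⟨v, hv⟩ := exists_ne (0 : V)
    refine ⟨Pi.single β v, fun h => hv (by simpa using congrFun h β), ?_⟩
    funext α
    rw [shiftW_apply, zero_smul, Pi.zero_apply]
    by_cases hα : φ α = β
    · have hw : w α = 0 := by_contra fun hw => hβ ⟨α, hw, hα⟩
      rw [hw, zero_smul]
    · rw [Pi.single_apply, if_neg hα, smul_zero]

variable {r : F}

theorem weightProd_smul_iterate_of_shiftW_eq {x : Γ → V} (hx : shiftW φ w x = r • x)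
    (α : Γ) (n : ℕ) : weightProd φ w α n • x (φ^[n] α) = r ^ n • x α := by
  induction n generalizing α with
  | zero => simp [weightProd_zero]
  | succ n ih =>
    rw [weightProd_succ', iterate_succ_apply, mul_smul, ih, smul_comm, ← shiftW_apply, hx,
      Pi.smul_apply, smul_smul, pow_succ]

theorem weightProd_eq_pow_of_mem_eigen {θ : Γ} {p : ℕ} (hr : r ≠ 0)
    (hreach : ∀ α, ∃ n, φ^[n] α = θ) (hθ : IsPeriodicPt φ p θ)
    (hmem : r ∈ Eigen (shiftW (V := V) φ w)) : weightProd φ w θ p = r ^ p := by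
  obtain ⟨x, hx0, hx⟩ := hmem
  obtain ⟨α, hα⟩ := Function.ne_iff.1 hx0
  obtain ⟨n, hn⟩ := hreach α
  have hxθ : x θ ≠ 0 := by
    have h := weightProd_smul_iterate_of_shiftW_eq hx α n
    rw [hn] at h
    exact right_ne_zero_of_smul (h ▸ smul_ne_zero (pow_ne_zero n hr) hα)
  have h := weightProd_smul_iterate_of_shiftW_eq hx θ p
  rw [hθ.eq] at h
  exact smul_left_injective F hxθ h

/-- Two path lengths from `α` onto `θ` differ by a multiple of the minimal period of `θ`. -/
theorem weightProd_div_pow_eq {θ α : Γ} (hr : r ≠ 0)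
    (hP : weightProd φ w θ (minimalPeriod φ θ) = r ^ minimalPeriod φ θ) {m n : ℕ}
    (hm : φ^[m] α = θ) (hn : φ^[n] α = θ) :
    weightProd φ w α m / r ^ m = weightProd φ w α n / r ^ n := by
  wlog hmn : m ≤ n generalizing m n
  · exact (this hn hm (le_of_not_ge hmn)).symm
  obtain ⟨d, rfl⟩ := Nat.exists_eq_add_of_le hmn
  have hd : IsPeriodicPt φ d θ := by rwa [add_comm, iterate_add_apply, hm] at hn
  obtain ⟨k, rfl⟩ := hd.minimalPeriod_dvd
  rw [weightProd_add, hm, (isPeriodicPt_minimalPeriod φ θ).weightProd_mul, hP, pow_add,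
    ← pow_mul, mul_div_mul_right _ _ (pow_ne_zero _ hr)]

theorem mem_eigen_of_weightProd_eq_pow [Nontrivial V] {θ : Γ} (hr : r ≠ 0)
    (hreach : ∀ α, ∃ n, φ^[n] α = θ)
    (hP : weightProd φ w θ (minimalPeriod φ θ) = r ^ minimalPeriod φ θ) :
    r ∈ Eigen (shiftW (V := V) φ w) := by
  choose N hN using hreach
  set c : Γ → F := fun α => weightProd φ w α (N α) / r ^ N α
  have hc : ∀ α n, φ^[n] α = θ → c α = weightProd φ w α n / r ^ n :=
    fun α n hn => weightProd_div_pow_eq hr hP (hN α) hn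
  obtain ⟨v, hv⟩ := exists_ne (0 : V)
  refine ⟨fun α => c α • v, fun h => hv ?_, ?_⟩
  · have hcθ : c θ = 1 := by rw [hc θ 0 rfl, weightProd_zero, pow_zero, div_one]
    simpa [hcθ] using congrFun h θ
  · funext α
    have hstep : φ^[N (φ α) + 1] α = θ := by rw [iterate_succ_apply, hN]
    simp only [shiftW_apply, Pi.smul_apply, smul_smul, hc α _ hstep, c, weightProd_succ', pow_succ]
    congr 1
    field_simp

theorem mem_eigen_shiftW_iff_of_ne_zero [Nontrivial V] {θ : Γ} (hr : r ≠ 0)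
    (hreach : ∀ α, ∃ n, φ^[n] α = θ) :
    r ∈ Eigen (shiftW (V := V) φ w) ↔
      weightProd φ w θ (minimalPeriod φ θ) = r ^ minimalPeriod φ θ :=
  ⟨weightProd_eq_pow_of_mem_eigen hr hreach (isPeriodicPt_minimalPeriod φ θ),
    mem_eigen_of_weightProd_eq_pow hr hreach⟩

end Shift

theorem eigen_of_no_wandering_outside_downZ_general
    {F V Γ : Type*} [Field F] [AddCommGroup V] [Module F V] [Nontrivial V]
    (φ : Γ → Γ) (w : Γ → F)
    (h3 : ∀ α β : Γ, ∃ n m : ℕ, 1 ≤ n ∧ 1 ≤ m ∧ φ^[n] α = φ^[m] β)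
    (θ : Γ) (hθ : θ ∈ periodicSet φ) :
    (φ '' {α : Γ | w α ≠ 0} = Set.univ →
      Eigen (shiftW (V := V) φ w) =
        {r : F | r ≠ 0 ∧ ∏ i ∈ Finset.range (perOf φ θ), w (φ^[i] θ) = r ^ perOf φ θ}) ∧
    (φ '' {α : Γ | w α ≠ 0} ≠ Set.univ →
      Eigen (shiftW (V := V) φ w) =
        {r : F | r ≠ 0 ∧ ∏ i ∈ Finset.range (perOf φ θ), w (φ^[i] θ) = r ^ perOf φ θ}
          ∪ {0}) := by
  have hθ' : θ ∈ periodicPts φ := by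
    obtain ⟨n, hn, h⟩ := hθ
    exact mk_mem_periodicPts hn h
  have hreach : ∀ α, ∃ n, φ^[n] α = θ := fun α =>
    let ⟨_, _, _, _, h⟩ := h3 α θ
    exists_iterate_eq_of_iterate_eq_iterate hθ' h
  have hzero := zero_mem_eigen_shiftW_iff (V := V) (φ := φ) (w := w)
  have hne : ∀ r : F, r ≠ 0 → (r ∈ Eigen (shiftW (V := V) φ w) ↔
      weightProd φ w θ (minimalPeriod φ θ) = r ^ minimalPeriod φ θ) :=
    fun r hr => mem_eigen_shiftW_iff_of_ne_zero hr hreach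
  rw [perOf_eq_minimalPeriod hθ]
  constructor <;> intro himg <;> ext r <;> rcases eq_or_ne r 0 with rfl | hr
  · simpa [hzero] using himg
  · simpa [hr, weightProd] using hne r hr
  · simpa [hzero] using himg
  · simpa [hr, weightProd] using hne r hr

theorem eigen_of_no_wandering_outside_downZ
    {F V Γ : Type*} [Field F] [AddCommGroup V] [Module F V] [Nonempty Γ] [Nontrivial V]
    (φ : Γ → Γ) (w : Γ → F)
    (h1 : wanderSet φ \ downZ φ w = ∅)
    (h2 : ((Set.univ : Set Γ) \ downZ φ w).Nonempty)
    (h3 : ∀ α β : Γ, ∃ n m : ℕ, 1 ≤ n ∧ 1 ≤ m ∧ φ^[n] α = φ^[m] β)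
    (θ : Γ) (hθ : θ ∈ periodicSet φ) :
    (φ '' {α : Γ | w α ≠ 0} = Set.univ →
      Eigen (shiftW (V := V) φ w) =
        {r : F | r ≠ 0 ∧ ∏ i ∈ Finset.range (perOf φ θ), w (φ^[i] θ) = r ^ perOf φ θ}) ∧
    (φ '' {α : Γ | w α ≠ 0} ≠ Set.univ →
      Eigen (shiftW (V := V) φ w) =
        {r : F | r ≠ 0 ∧ ∏ i ∈ Finset.range (perOf φ θ), w (φ^[i] θ) = r ^ perOf φ θ}
          ∪ {0}) :=
  eigen_of_no_wandering_outside_downZ_general φ w h3 θ hθ
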